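/- arXiv:1008.2969 — 2 statements merged into one kernel-verified Lean document; each statement's English description precedes it below -/
import Mathlib

section
/- Let J be a smooth almost complex structure on an open subset of ℝ^{2n}, let ρ be a C² real-valued function, and let u, v : Δ → ℝ^{2n} be two J-holomorphic discs with u(0) = v(0) = p and d₀u(∂/∂x) = d₀v(∂/∂x). Then Δ(ρ∘u)(0) = Δ(ρ∘v)(0); that is, the Laplacian of ρ composed with a J-holomorphic disc at the center depends only on the point p and the vector d₀u(∂/∂x) (it equals the Levi form 𝓛_Jρ(p, v)). -/
/-!
By the second-order chain rule, with `p = u 0`, `a = ∂ₓu(0)` and `∂ᵧu(0) = J(p) a`,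
`Δ(ρ ∘ u)(0) = D²ρ(p)(a, a) + D²ρ(p)(J a, J a) + Dρ(p)((∂ₓ² + ∂ᵧ²) u(0))`.
Differentiating `∂ᵧu = J(u) ∂ₓu` in both directions and using the symmetry of `D²u(0)` together
with `J(p)² = -1`, the trace `(∂ₓ² + ∂ᵧ²) u(0)` equals `J(p)(DJ(p)(a) a) + DJ(p)(J(p) a) a`.
Hence the Laplacian depends only on `p` and `a`.
-/

open Metric Set

noncomputable section

/-- A `J`-holomorphic disc with values in `Ω ⊆ ℝ^{2n} ≅ ℂⁿ`. -/
def JDiscE {n : ℕ}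
    (J : EuclideanSpace ℂ (Fin n) →
      (EuclideanSpace ℂ (Fin n) →L[ℝ] EuclideanSpace ℂ (Fin n)))
    (Ω : Set (EuclideanSpace ℂ (Fin n))) (u : ℂ → EuclideanSpace ℂ (Fin n)) : Prop :=
  Set.MapsTo u (Metric.ball 0 1) Ω ∧ ContDiffOn ℝ (⊤ : ℕ∞) u (Metric.ball 0 1) ∧
    ∀ ζ ∈ Metric.ball (0:ℂ) 1, fderiv ℝ u ζ Complex.I = J (u ζ) (fderiv ℝ u ζ 1)

/-- The Laplacian of a real valued function on (an open subset of) `ℂ`. -/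
noncomputable def lap (f : ℂ → ℝ) (ζ : ℂ) : ℝ :=
  fderiv ℝ (fun z => fderiv ℝ f z 1) ζ 1 +
    fderiv ℝ (fun z => fderiv ℝ f z Complex.I) ζ Complex.I

open Filter Topology

section SecondDerivatives

variable {𝕜 : Type*} [NontriviallyNormedField 𝕜]
  {E F G : Type*} [NormedAddCommGroup E] [NormedSpace 𝕜 E] [NormedAddCommGroup F]
  [NormedSpace 𝕜 F] [NormedAddCommGroup G] [NormedSpace 𝕜 G] {u : E → F} {x : E}

theorem ContDiffAt.eventually_differentiableAt {n : ℕ} (hu : ContDiffAt 𝕜 n u x) (hn : n ≠ 0) :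
    ∀ᶠ z in 𝓝 x, DifferentiableAt 𝕜 u z :=
  (hu.eventually (by simp)).mono fun _ hz => hz.differentiableAt (by exact_mod_cast hn)

theorem ContDiffAt.differentiableAt_fderiv {n : WithTop ℕ∞} (hu : ContDiffAt 𝕜 n u x)
    (hn : 2 ≤ n) : DifferentiableAt 𝕜 (fderiv 𝕜 u) x :=
  (hu.fderiv_right (m := 1) hn).differentiableAt one_ne_zero

theorem fderiv_fderiv_apply (hu : DifferentiableAt 𝕜 (fderiv 𝕜 u) x) (v w : E) :
    fderiv 𝕜 (fun z => fderiv 𝕜 u z v) x w = fderiv 𝕜 (fderiv 𝕜 u) x w v := by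
  rw [fderiv_clm_apply hu (differentiableAt_const v)]
  simp

theorem fderiv_apply_fderiv_comp {A : F → F →L[𝕜] G} (hA : DifferentiableAt 𝕜 A (u x))
    (hu : DifferentiableAt 𝕜 u x) (hu' : DifferentiableAt 𝕜 (fderiv 𝕜 u) x) (v w : E) :
    fderiv 𝕜 (fun z => A (u z) (fderiv 𝕜 u z v)) x w =
      A (u x) (fderiv 𝕜 (fderiv 𝕜 u) x w v) +
        fderiv 𝕜 A (u x) (fderiv 𝕜 u x w) (fderiv 𝕜 u x v) := by
  rw [fderiv_clm_apply (c := fun z => A (u z)) (hA.comp x hu)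
    (hu'.clm_apply (differentiableAt_const v)), fderiv_fun_comp x hA hu]
  simp [fderiv_fderiv_apply hu']

theorem fderiv_fderiv_comp_apply {ρ : F → G} (hρ : ContDiffAt 𝕜 2 ρ (u x))
    (hu : ContDiffAt 𝕜 2 u x) (v w : E) :
    fderiv 𝕜 (fun z => fderiv 𝕜 (fun ζ => ρ (u ζ)) z v) x w =
      fderiv 𝕜 ρ (u x) (fderiv 𝕜 (fderiv 𝕜 u) x w v) +
        fderiv 𝕜 (fderiv 𝕜 ρ) (u x) (fderiv 𝕜 u x w) (fderiv 𝕜 u x v) := by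
  have hchain : (fun z => fderiv 𝕜 (fun ζ => ρ (u ζ)) z v) =ᶠ[𝓝 x]
      fun z => fderiv 𝕜 ρ (u z) (fderiv 𝕜 u z v) := by
    filter_upwards [hu.eventually_differentiableAt two_ne_zero,
      hu.continuousAt.eventually (hρ.eventually_differentiableAt two_ne_zero)] with z huz hρz
    rw [fderiv_fun_comp z hρz huz, ContinuousLinearMap.comp_apply]
  rw [hchain.fderiv_eq, fderiv_apply_fderiv_comp (hρ.differentiableAt_fderiv le_rfl)
    (hu.differentiableAt two_ne_zero) (hu.differentiableAt_fderiv le_rfl)]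

theorem fderiv_fderiv_apply_of_eventuallyEq {A : F → F →L[𝕜] F}
    (hA : DifferentiableAt 𝕜 A (u x)) (hu : ContDiffAt 𝕜 2 u x) {a b : E}
    (hab : ∀ᶠ z in 𝓝 x, fderiv 𝕜 u z a = A (u z) (fderiv 𝕜 u z b)) (w : E) :
    fderiv 𝕜 (fderiv 𝕜 u) x w a =
      A (u x) (fderiv 𝕜 (fderiv 𝕜 u) x w b) +
        fderiv 𝕜 A (u x) (fderiv 𝕜 u x w) (fderiv 𝕜 u x b) := by
  rw [← fderiv_fderiv_apply (hu.differentiableAt_fderiv le_rfl), EventuallyEq.fderiv_eq hab,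
    fderiv_apply_fderiv_comp hA (hu.differentiableAt two_ne_zero)
      (hu.differentiableAt_fderiv le_rfl)]

end SecondDerivatives

def leviForm {E : Type*} [NormedAddCommGroup E] [NormedSpace ℝ E] (J : E → E →L[ℝ] E)
    (ρ : E → ℝ) (p a : E) : ℝ :=
  fderiv ℝ (fderiv ℝ ρ) p a a + fderiv ℝ (fderiv ℝ ρ) p (J p a) (J p a) +
    fderiv ℝ ρ p (J p (fderiv ℝ J p a a) + fderiv ℝ J p (J p a) a)

namespace JDiscE

variable {n : ℕ} {J : EuclideanSpace ℂ (Fin n) →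
      (EuclideanSpace ℂ (Fin n) →L[ℝ] EuclideanSpace ℂ (Fin n))}
  {Ω : Set (EuclideanSpace ℂ (Fin n))} {u : ℂ → EuclideanSpace ℂ (Fin n)}

theorem contDiffAt (hu : JDiscE J Ω u) {z : ℂ} (hz : z ∈ ball (0 : ℂ) 1) :
    ContDiffAt ℝ 2 u z :=
  (hu.2.1.contDiffAt (isOpen_ball.mem_nhds hz)).of_le (WithTop.coe_le_coe.2 le_top)

theorem fderiv_fderiv_apply_I (hu : JDiscE J Ω u) (hJ : DifferentiableAt ℝ J (u 0))
    (w : ℂ) :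
    fderiv ℝ (fderiv ℝ u) 0 w Complex.I = J (u 0) (fderiv ℝ (fderiv ℝ u) 0 w 1) +
      fderiv ℝ J (u 0) (fderiv ℝ u 0 w) (fderiv ℝ u 0 1) :=
  fderiv_fderiv_apply_of_eventuallyEq hJ (hu.contDiffAt (mem_ball_self one_pos))
    (eventually_of_mem (isOpen_ball.mem_nhds (mem_ball_self one_pos)) hu.2.2) w

theorem fderiv_fderiv_trace (hu : JDiscE J Ω u) (hJ : DifferentiableAt ℝ J (u 0))
    (hJsq : (J (u 0)).comp (J (u 0)) = -ContinuousLinearMap.id ℝ (EuclideanSpace ℂ (Fin n))) :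
    fderiv ℝ (fderiv ℝ u) 0 1 1 + fderiv ℝ (fderiv ℝ u) 0 Complex.I Complex.I =
      J (u 0) (fderiv ℝ J (u 0) (fderiv ℝ u 0 1) (fderiv ℝ u 0 1)) +
        fderiv ℝ J (u 0) (J (u 0) (fderiv ℝ u 0 1)) (fderiv ℝ u 0 1) := by
  have hsymm := (hu.contDiffAt (mem_ball_self one_pos)).isSymmSndFDerivAt (by simp)
  have hJJ : ∀ x, J (u 0) (J (u 0) x) = -x := fun x => by
    simpa using congrArg (fun L => L x) hJsq
  rw [hu.fderiv_fderiv_apply_I hJ, hsymm.eq Complex.I 1, hu.fderiv_fderiv_apply_I hJ, map_add,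
    hJJ, hu.2.2 0 (mem_ball_self one_pos)]
  abel

theorem lap_comp_eq_leviForm (hu : JDiscE J Ω u) (hJ : DifferentiableAt ℝ J (u 0))
    (hJsq : (J (u 0)).comp (J (u 0)) = -ContinuousLinearMap.id ℝ (EuclideanSpace ℂ (Fin n)))
    {ρ : EuclideanSpace ℂ (Fin n) → ℝ} (hρ : ContDiffAt ℝ 2 ρ (u 0)) :
    lap (fun ζ => ρ (u ζ)) 0 = leviForm J ρ (u 0) (fderiv ℝ u 0 1) := by
  have hu0 := hu.contDiffAt (mem_ball_self one_pos)
  rw [lap, fderiv_fderiv_comp_apply hρ hu0, fderiv_fderiv_comp_apply hρ hu0,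
    hu.2.2 0 (mem_ball_self one_pos), leviForm, ← hu.fderiv_fderiv_trace hJ hJsq, map_add]
  ring

end JDiscE

/-- The Laplacian of `ρ ∘ u` at the center of a `J`-holomorphic disc depends
only on the center point and on `d₀u(∂/∂x)` (it is the Levi form of `ρ`). -/
theorem laplacian_center_depends_only_on_jet (n : ℕ)
    (Ω : Set (EuclideanSpace ℂ (Fin n))) (hΩ : IsOpen Ω)
    (J : EuclideanSpace ℂ (Fin n) →
      (EuclideanSpace ℂ (Fin n) →L[ℝ] EuclideanSpace ℂ (Fin n)))
    (hJs : ContDiffOn ℝ (⊤ : ℕ∞) J Ω)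
    (hJsq : ∀ z ∈ Ω, (J z).comp (J z) =
      -ContinuousLinearMap.id ℝ (EuclideanSpace ℂ (Fin n)))
    (ρ : EuclideanSpace ℂ (Fin n) → ℝ) (hρ : ContDiffOn ℝ 2 ρ Ω)
    (u v : ℂ → EuclideanSpace ℂ (Fin n))
    (hu : JDiscE J Ω u) (hv : JDiscE J Ω v)
    (h0 : u 0 = v 0) (hd : fderiv ℝ u 0 1 = fderiv ℝ v 0 1) :
    lap (fun ζ => ρ (u ζ)) 0 = lap (fun ζ => ρ (v ζ)) 0 := by
  have hp : u 0 ∈ Ω := hu.1 (mem_ball_self one_pos)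
  have hJ : DifferentiableAt ℝ J (u 0) :=
    (hJs.contDiffAt (hΩ.mem_nhds hp)).differentiableAt (by simp)
  have hρ' : ContDiffAt ℝ 2 ρ (u 0) := hρ.contDiffAt (hΩ.mem_nhds hp)
  rw [hu.lap_comp_eq_leviForm hJ (hJsq _ hp) hρ',
    hv.lap_comp_eq_leviForm (h0 ▸ hJ) (h0 ▸ hJsq _ hp) (h0 ▸ hρ'), h0, hd]

end
end

section
/- Let J be a smooth almost complex structure on an open subset of ℝ⁴ satisfying normal form (1), with block entries a₁, b₁, c₁, a₂, b₂, c₂. Let u = (u₁, u₂) be a J-holomorphic disc, let ζ₀ ∈ Δ, write z = u(ζ₀) and (X₁, Y₁, X₂, Y₂) = ∂u/∂x(ζ₀) in coordinates (x₁, y₁, x₂, y₂). Then the Laplacian of Re u₂ at ζ₀ (which equals the Levi form of Re z₂ at (z, v)) is: Δ(Re u₂)(ζ₀) = [(a₁−a₂)(z) ∂a₂/∂x₁(z) − c₂(z) ∂b₂/∂x₁(z) + c₁(z) ∂a₂/∂y₁(z)] X₁X₂ + [(a₁+a₂)(z) ∂b₂/∂x₁(z) − b₂(z) ∂a₂/∂x₁(z)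 + c₁(z) ∂b₂/∂y₁(z)] X₁Y₂ + [−(a₁+a₂)(z) ∂a₂/∂y₁(z) + b₁(z) ∂a₂/∂x₁(z) − c₂(z) ∂b₂/∂y₁(z)] Y₁X₂ + [(a₂−a₁)(z) ∂b₂/∂y₁(z) + b₁(z) ∂b₂/∂x₁(z) − b₂(z) ∂a₂/∂y₁(z)] Y₁Y₂ + [∂a₂/∂y₂(z) − ∂b₂/∂x₂(z)] (c₂(z) X₂² − 2a₂(z) X₂Y₂ − b₂(z) Y₂²). -/
open Metric Set

noncomputable section

abbrev C2 := ℂ × ℂ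

noncomputable def mulI : ℂ →L[ℝ] ℂ := Complex.I • ContinuousLinearMap.id ℝ ℂ

noncomputable def Jst : C2 →L[ℝ] C2 := mulI.prodMap mulI

/-- `u` is a `J`-holomorphic disc with values in `Ω`. -/
def JDisc (J : C2 → (C2 →L[ℝ] C2)) (Ω : Set C2) (u : ℂ → C2) : Prop :=
  Set.MapsTo u (Metric.ball 0 1) Ω ∧ ContDiffOn ℝ (⊤ : ℕ∞) u (Metric.ball 0 1) ∧
    ∀ ζ ∈ Metric.ball (0:ℂ) 1, fderiv ℝ u ζ Complex.I = J (u ζ) (fderiv ℝ u ζ 1)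

/-- Submean-value subharmonicity. -/
def SubharmOn (f : ℂ → ℝ) (s : Set ℂ) : Prop :=
  ContinuousOn f s ∧ ∀ c : ℂ, ∀ r : ℝ, 0 < r → Metric.closedBall c r ⊆ s →
    f c ≤ (2 * Real.pi)⁻¹ * ∫ θ in (0:ℝ)..(2 * Real.pi), f (c + r * Complex.exp (θ * Complex.I))

def JPsh (J : C2 → (C2 →L[ℝ] C2)) (φ : C2 → ℝ) (V : Set C2) : Prop :=
  ∀ u : ℂ → C2, JDisc J V u → SubharmOn (fun ζ => φ (u ζ)) (Metric.ball 0 1)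

def IsNormalForm1 (J : C2 → (C2 →L[ℝ] C2)) (U : Set C2)
    (a₁ b₁ c₁ a₂ b₂ c₂ : C2 → ℝ) : Prop :=
  ContDiffOn ℝ (⊤ : ℕ∞) a₁ U ∧ ContDiffOn ℝ (⊤ : ℕ∞) b₁ U ∧ ContDiffOn ℝ (⊤ : ℕ∞) c₁ U ∧
  ContDiffOn ℝ (⊤ : ℕ∞) a₂ U ∧ ContDiffOn ℝ (⊤ : ℕ∞) b₂ U ∧ ContDiffOn ℝ (⊤ : ℕ∞) c₂ U ∧
  (∀ z ∈ U, ∀ v : C2, J z v =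
    ((↑(a₁ z * v.1.re + b₁ z * v.1.im) + ↑(c₁ z * v.1.re - a₁ z * v.1.im) * Complex.I,
      ↑(a₂ z * v.2.re + b₂ z * v.2.im) + ↑(c₂ z * v.2.re - a₂ z * v.2.im) * Complex.I) : C2)) ∧
  ∃ C : ℝ, 0 ≤ C ∧ ∀ z ∈ U, ‖J z - Jst‖ ≤ C * ‖z.2‖

def NormalForm1 (J : C2 → (C2 →L[ℝ] C2)) (U : Set C2) : Prop :=
  ∃ a₁ b₁ c₁ a₂ b₂ c₂ : C2 → ℝ, IsNormalForm1 J U a₁ b₁ c₁ a₂ b₂ c₂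

/-- A real-valued homogeneous polynomial of degree `2m` in `z, z̄`. -/
def IsHomPoly (H : ℂ → ℝ) (m : ℕ) : Prop :=
  ∃ c : Fin (2 * m + 1) → ℂ,
    ∀ z : ℂ, H z = (∑ j : Fin (2 * m + 1),
      c j * z ^ (j : ℕ) * (starRingEnd ℂ z) ^ (2 * m - (j : ℕ))).re

/-- Normal form (2) for the defining function (with vanishing harmonic term `H̃`). -/
def NormalForm2 (ρ : C2 → ℝ) (m : ℕ) : Prop :=
  ∃ H : ℂ → ℝ, IsHomPoly H m ∧ SubharmOn H Set.univ ∧ (∃ w : ℂ, lap H w ≠ 0) ∧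
    ∃ C : ℝ, 0 < C ∧ ∃ ε : ℝ, 0 < ε ∧ ∀ z : C2, ‖z.1‖ < ε → ‖z.2‖ < ε →
      |ρ z - (z.2.re + H z.1)| ≤
        C * (‖z.1‖ ^ (2 * m + 1) + ‖z.2‖ * ‖z.1‖ ^ m +
          ‖z.2‖ ^ 2)

def vanishOrderAt {E : Type*} [NormedAddCommGroup E] [NormedSpace ℝ E]
    (f : ℂ → E) (n : ℕ) : Prop :=
  (∀ k < n, iteratedFDeriv ℝ k f 0 = 0) ∧ iteratedFDeriv ℝ n f 0 ≠ 0

/-- The set of ratios `δ₀(∂D,u)/δ(u)` entering the definition of the D'Angelo type. -/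
def ratioSet (J : C2 → (C2 →L[ℝ] C2)) (Ω : Set C2) (ρ : C2 → ℝ) (q : C2) : Set ℝ :=
  { t | ∃ u : ℂ → C2, JDisc J Ω u ∧ u 0 = q ∧ (∃ ζ ∈ Metric.ball (0:ℂ) 1, u ζ ≠ q) ∧
      ∃ d n : ℕ, vanishOrderAt (fun ζ => ρ (u ζ)) d ∧
        vanishOrderAt (fun ζ => u ζ - q) n ∧ t = (d : ℝ) / (n : ℝ) }

/-- The anisotropic polydisc `Q(0,δ)`. -/
def Qpoly (m : ℕ) (δ : ℝ) : Set C2 :=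
  { z | ‖z.1‖ < δ ^ (1 / (2 * (m:ℝ))) ∧ ‖z.2‖ < δ }


/-!
Write `u₂ = f + i g`. The second block of `J (u ζ) ∂ₓu = ∂ᵧu` is the first-order system
`f_y = α f_x + β g_x`, `g_y = γ f_x - α g_x` with `α, β, γ = a₂, b₂, c₂` along `u`, and `J² = -1`
forces `α² + β γ = -1`. Differentiating the first equation in `y` and using `f_xy = f_yx`,
`g_xy = g_yx` together with the `x`-derivative of the system, the coefficient of `f_xx` in `f_yy`
is `α² + β γ = -1`, so `f_xx` cancels in `Δ f`; the derivative of `α² + β γ = -1` removes `γ_x`,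
and what remains is linear in first derivatives of `a₂, b₂` along `u`, which the chain rule
evaluates on `∂ₓu` and `∂ᵧu = J ∂ₓu`.
-/

open Filter Topology Complex

section Calculus

variable {E F G : Type*} [NormedAddCommGroup E] [NormedSpace ℝ E]
  [NormedAddCommGroup F] [NormedSpace ℝ F] [NormedAddCommGroup G] [NormedSpace ℝ G]

theorem ContDiffAt.fderiv_fderiv_apply_comm {f : E → F} {x : E} (hf : ContDiffAt ℝ 2 f x)
    (v w : E) :
    fderiv ℝ (fun y => fderiv ℝ f y v) x w = fderiv ℝ (fun y => fderiv ℝ f y w) x v := by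
  have h := VectorField.fderiv_apply_lieBracket hf (by simp) (differentiableAt_const w)
    (differentiableAt_const v)
  simp only [VectorField.lieBracket, fderiv_fun_const, Pi.zero_apply, zero_apply, sub_self,
    map_zero] at h
  exact (sub_eq_zero.mp h.symm).symm

theorem ContDiffAt.differentiableAt_fderiv_apply {f : E → F} {x : E} (hf : ContDiffAt ℝ 2 f x)
    (v : E) : DifferentiableAt ℝ (fun y => fderiv ℝ f y v) x :=
  ((hf.fderiv_right (m := 1) le_rfl).differentiableAt one_ne_zero).clm_apply
    (differentiableAt_const v)

theorem fderiv_fun_mul_apply {p q : E → ℝ} {x : E} (hp : DifferentiableAt ℝ p x)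
    (hq : DifferentiableAt ℝ q x) (v : E) :
    fderiv ℝ (fun y => p y * q y) x v = fderiv ℝ p x v * q x + p x * fderiv ℝ q x v := by
  rw [fderiv_fun_mul hp hq]
  simp only [add_apply, smul_apply, smul_eq_mul]
  ring

theorem fderiv_fun_comp_apply {g : F → G} {f : E → F} {x : E} (hg : DifferentiableAt ℝ g (f x))
    (hf : DifferentiableAt ℝ f x) (v : E) :
    fderiv ℝ (fun y => g (f y)) x v = fderiv ℝ g (f x) (fderiv ℝ f x v) :=
  DFunLike.congr_fun (hg.hasFDerivAt.comp x hf.hasFDerivAt).fderiv v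

theorem fderiv_re_snd_apply {u : E → F × ℂ} {x : E} (hu : DifferentiableAt ℝ u x) (v : E) :
    fderiv ℝ (fun t => (u t).2.re) x v = (fderiv ℝ u x v).2.re :=
  DFunLike.congr_fun (reCLM.hasFDerivAt.comp x hu.hasFDerivAt.snd).fderiv v

theorem fderiv_im_snd_apply {u : E → F × ℂ} {x : E} (hu : DifferentiableAt ℝ u x) (v : E) :
    fderiv ℝ (fun t => (u t).2.im) x v = (fderiv ℝ u x v).2.im :=
  DFunLike.congr_fun (imCLM.hasFDerivAt.comp x hu.hasFDerivAt.snd).fderiv v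

theorem ContinuousLinearMap.apply_eq_re_im_sum (L : ℂ × ℂ →L[ℝ] F) (v : ℂ × ℂ) :
    L v = v.1.re • L (1, 0) + v.1.im • L (I, 0) + v.2.re • L (0, 1) + v.2.im • L (0, I) := by
  conv_lhs => rw [show v = v.1.re • ((1 : ℂ), (0 : ℂ)) + v.1.im • (I, 0) + v.2.re • (0, 1)
    + v.2.im • (0, I) by ext <;> simp]
  simp only [map_add, map_smul]

end Calculus

section CauchyRiemannSystem

variable {f g α β γ : ℂ → ℝ} {ζ₀ : ℂ}

theorem fderiv_sq_add_mul_eq_zero (hα : DifferentiableAt ℝ α ζ₀)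
    (hβ : DifferentiableAt ℝ β ζ₀) (hγ : DifferentiableAt ℝ γ ζ₀)
    (hsq : (fun ζ => α ζ ^ 2 + β ζ * γ ζ) =ᶠ[𝓝 ζ₀] fun _ => -1) (v : ℂ) :
    2 * α ζ₀ * fderiv ℝ α ζ₀ v + fderiv ℝ β ζ₀ v * γ ζ₀ + β ζ₀ * fderiv ℝ γ ζ₀ v = 0 := by
  have hderiv := (hα.hasFDerivAt.pow 2).add (hβ.hasFDerivAt.mul hγ.hasFDerivAt)
  have hzero := (hasFDerivAt_const (-1 : ℝ) ζ₀ (𝕜 := ℝ)).congr_of_eventuallyEq hsq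
  have h := DFunLike.congr_fun (hderiv.unique hzero) v
  simp only [add_apply, smul_apply, smul_eq_mul, zero_apply] at h
  linear_combination h

theorem lap_eq_of_cauchyRiemann_system (hf : ContDiffAt ℝ 2 f ζ₀) (hg : ContDiffAt ℝ 2 g ζ₀)
    (hα : DifferentiableAt ℝ α ζ₀) (hβ : DifferentiableAt ℝ β ζ₀) (hγ : DifferentiableAt ℝ γ ζ₀)
    (hfI : (fun ζ => fderiv ℝ f ζ I) =ᶠ[𝓝 ζ₀]
      fun ζ => α ζ * fderiv ℝ f ζ 1 + β ζ * fderiv ℝ g ζ 1)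
    (hgI : (fun ζ => fderiv ℝ g ζ I) =ᶠ[𝓝 ζ₀]
      fun ζ => γ ζ * fderiv ℝ f ζ 1 - α ζ * fderiv ℝ g ζ 1)
    (hsq : (fun ζ => α ζ ^ 2 + β ζ * γ ζ) =ᶠ[𝓝 ζ₀] fun _ => -1) :
    lap f ζ₀ =
      fderiv ℝ f ζ₀ 1 * (fderiv ℝ α ζ₀ I - α ζ₀ * fderiv ℝ α ζ₀ 1 - γ ζ₀ * fderiv ℝ β ζ₀ 1)
      + fderiv ℝ g ζ₀ 1 * (fderiv ℝ β ζ₀ I + α ζ₀ * fderiv ℝ β ζ₀ 1 - β ζ₀ * fderiv ℝ α ζ₀ 1) := by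
  have hfx := hf.differentiableAt_fderiv_apply 1
  have hgx := hg.differentiableAt_fderiv_apply 1
  have hfy (v : ℂ) : fderiv ℝ (fun ζ => fderiv ℝ f ζ I) ζ₀ v =
      fderiv ℝ α ζ₀ v * fderiv ℝ f ζ₀ 1 + α ζ₀ * fderiv ℝ (fun ζ => fderiv ℝ f ζ 1) ζ₀ v
      + (fderiv ℝ β ζ₀ v * fderiv ℝ g ζ₀ 1 + β ζ₀ * fderiv ℝ (fun ζ => fderiv ℝ g ζ 1) ζ₀ v) := by
    rw [hfI.fderiv_eq, fderiv_fun_add (hα.fun_mul hfx) (hβ.fun_mul hgx), add_apply,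
      fderiv_fun_mul_apply hα hfx, fderiv_fun_mul_apply hβ hgx]
  have hgy : fderiv ℝ (fun ζ => fderiv ℝ g ζ I) ζ₀ 1 =
      fderiv ℝ γ ζ₀ 1 * fderiv ℝ f ζ₀ 1 + γ ζ₀ * fderiv ℝ (fun ζ => fderiv ℝ f ζ 1) ζ₀ 1
      - (fderiv ℝ α ζ₀ 1 * fderiv ℝ g ζ₀ 1 + α ζ₀ * fderiv ℝ (fun ζ => fderiv ℝ g ζ 1) ζ₀ 1) := by
    rw [hgI.fderiv_eq, fderiv_fun_sub (hγ.fun_mul hfx) (hα.fun_mul hgx), sub_apply,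
      fderiv_fun_mul_apply hγ hfx, fderiv_fun_mul_apply hα hgx]
  rw [lap, hfy, hf.fderiv_fderiv_apply_comm 1 I, hg.fderiv_fderiv_apply_comm 1 I, hfy, hgy]
  linear_combination fderiv ℝ (fun ζ => fderiv ℝ f ζ 1) ζ₀ 1 * hsq.eq_of_nhds
    + fderiv ℝ f ζ₀ 1 * fderiv_sq_add_mul_eq_zero hα hβ hγ hsq 1

end CauchyRiemannSystem

theorem sq_add_mul_eq_neg_one_of_comp_self {L : C2 →L[ℝ] C2}
    (hL : L.comp L = -ContinuousLinearMap.id ℝ C2) {a b c : ℝ}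
    (hLv : ∀ v : C2, (L v).2 = ↑(a * v.2.re + b * v.2.im) + ↑(c * v.2.re - a * v.2.im) * I) :
    a ^ 2 + b * c = -1 := by
  have h := congrArg (fun v : C2 => v.2.re) (DFunLike.congr_fun hL (0, 1))
  simp only [ContinuousLinearMap.comp_apply, hLv, neg_apply, ContinuousLinearMap.id_apply,
    Prod.snd_neg, neg_re, add_re, add_im, mul_re, mul_im, ofReal_re, ofReal_im, I_re, I_im, one_re,
    one_im] at h
  linear_combination h

theorem levi_form_of_re_z2_general
    (Ω : Set C2) (hΩ : IsOpen Ω)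
    (J : C2 → (C2 →L[ℝ] C2))
    (hJsq : ∀ z ∈ Ω, (J z).comp (J z) = -ContinuousLinearMap.id ℝ C2)
    (a₁ b₁ c₁ a₂ b₂ c₂ : C2 → ℝ)
    (hNF : IsNormalForm1 J Ω a₁ b₁ c₁ a₂ b₂ c₂)
    (u : ℂ → C2) (hu : JDisc J Ω u) (ζ₀ : ℂ) (hζ₀ : ζ₀ ∈ Metric.ball (0:ℂ) 1) :
    lap (fun t => ((u t).2).re) ζ₀ =
      ((a₁ (u ζ₀) - a₂ (u ζ₀)) * fderiv ℝ a₂ (u ζ₀) ((1:ℂ), (0:ℂ))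
          - c₂ (u ζ₀) * fderiv ℝ b₂ (u ζ₀) ((1:ℂ), (0:ℂ))
          + c₁ (u ζ₀) * fderiv ℝ a₂ (u ζ₀) ((Complex.I), (0:ℂ)))
        * (fderiv ℝ u ζ₀ 1).1.re * (fderiv ℝ u ζ₀ 1).2.re
      + ((a₁ (u ζ₀) + a₂ (u ζ₀)) * fderiv ℝ b₂ (u ζ₀) ((1:ℂ), (0:ℂ))
          - b₂ (u ζ₀) * fderiv ℝ a₂ (u ζ₀) ((1:ℂ), (0:ℂ))
          + c₁ (u ζ₀) * fderiv ℝ b₂ (u ζ₀) ((Complex.I), (0:ℂ)))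
        * (fderiv ℝ u ζ₀ 1).1.re * (fderiv ℝ u ζ₀ 1).2.im
      + (-(a₁ (u ζ₀) + a₂ (u ζ₀)) * fderiv ℝ a₂ (u ζ₀) ((Complex.I), (0:ℂ))
          + b₁ (u ζ₀) * fderiv ℝ a₂ (u ζ₀) ((1:ℂ), (0:ℂ))
          - c₂ (u ζ₀) * fderiv ℝ b₂ (u ζ₀) ((Complex.I), (0:ℂ)))
        * (fderiv ℝ u ζ₀ 1).1.im * (fderiv ℝ u ζ₀ 1).2.re
      + ((a₂ (u ζ₀) - a₁ (u ζ₀)) * fderiv ℝ b₂ (u ζ₀) ((Complex.I), (0:ℂ))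
          + b₁ (u ζ₀) * fderiv ℝ b₂ (u ζ₀) ((1:ℂ), (0:ℂ))
          - b₂ (u ζ₀) * fderiv ℝ a₂ (u ζ₀) ((Complex.I), (0:ℂ)))
        * (fderiv ℝ u ζ₀ 1).1.im * (fderiv ℝ u ζ₀ 1).2.im
      + (fderiv ℝ a₂ (u ζ₀) ((0:ℂ), (Complex.I))
          - fderiv ℝ b₂ (u ζ₀) ((0:ℂ), (1:ℂ)))
        * (c₂ (u ζ₀) * (fderiv ℝ u ζ₀ 1).2.re ^ 2
          - 2 * a₂ (u ζ₀) * (fderiv ℝ u ζ₀ 1).2.re * (fderiv ℝ u ζ₀ 1).2.im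
          - b₂ (u ζ₀) * (fderiv ℝ u ζ₀ 1).2.im ^ 2) := by
  obtain ⟨hmap, hsmooth, hCR⟩ := hu
  obtain ⟨-, -, -, ha₂, hb₂, hc₂, hform, -⟩ := hNF
  have hball : ball (0 : ℂ) 1 ∈ 𝓝 ζ₀ := isOpen_ball.mem_nhds hζ₀
  have hsmoothAt {ζ : ℂ} (hζ : ζ ∈ ball (0 : ℂ) 1) : ContDiffAt ℝ (⊤ : ℕ∞) u ζ :=
    hsmooth.contDiffAt (isOpen_ball.mem_nhds hζ)
  have hdiff {ζ : ℂ} (hζ : ζ ∈ ball (0 : ℂ) 1) : DifferentiableAt ℝ u ζ :=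
    (hsmoothAt hζ).differentiableAt (by simp)
  have hu₂ : ContDiffAt ℝ 2 u ζ₀ := (hsmoothAt hζ₀).of_le (by norm_cast)
  have hu₀ := hdiff hζ₀
  have hcoef {φ : C2 → ℝ} (hφ : ContDiffOn ℝ (⊤ : ℕ∞) φ Ω) : DifferentiableAt ℝ φ (u ζ₀) :=
    (hφ.contDiffAt (hΩ.mem_nhds (hmap hζ₀))).differentiableAt (by simp)
  rw [lap_eq_of_cauchyRiemann_system (f := fun t => (u t).2.re) (g := fun t => (u t).2.im)
    (α := fun ζ => a₂ (u ζ)) (β := fun ζ => b₂ (u ζ)) (γ := fun ζ => c₂ (u ζ))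
    (reCLM.contDiff.contDiffAt.comp ζ₀ hu₂.snd) (imCLM.contDiff.contDiffAt.comp ζ₀ hu₂.snd)
    ((hcoef ha₂).comp ζ₀ hu₀) ((hcoef hb₂).comp ζ₀ hu₀) ((hcoef hc₂).comp ζ₀ hu₀)]
  · simp only [fderiv_re_snd_apply hu₀, fderiv_im_snd_apply hu₀,
      fderiv_fun_comp_apply (hcoef ha₂) hu₀, fderiv_fun_comp_apply (hcoef hb₂) hu₀]
    rw [(fderiv ℝ a₂ (u ζ₀)).apply_eq_re_im_sum (fderiv ℝ u ζ₀ I),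
      (fderiv ℝ a₂ (u ζ₀)).apply_eq_re_im_sum (fderiv ℝ u ζ₀ 1),
      (fderiv ℝ b₂ (u ζ₀)).apply_eq_re_im_sum (fderiv ℝ u ζ₀ I),
      (fderiv ℝ b₂ (u ζ₀)).apply_eq_re_im_sum (fderiv ℝ u ζ₀ 1), hCR ζ₀ hζ₀, hform _ (hmap hζ₀)]
    simp only [add_re, add_im, mul_re, mul_im, ofReal_re, ofReal_im, I_re, I_im, smul_eq_mul]
    ring
  · filter_upwards [hball] with ζ hζ
    simp [fderiv_re_snd_apply (hdiff hζ), fderiv_im_snd_apply (hdiff hζ), hCR ζ hζ,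
      hform _ (hmap hζ)]
  · filter_upwards [hball] with ζ hζ
    simp [fderiv_re_snd_apply (hdiff hζ), fderiv_im_snd_apply (hdiff hζ), hCR ζ hζ,
      hform _ (hmap hζ)]
  · filter_upwards [hball] with ζ hζ
    exact sq_add_mul_eq_neg_one_of_comp_self (hJsq _ (hmap hζ)) fun v => by
      simp [hform _ (hmap hζ)]

/-- Explicit formula for the Laplacian of `Re u₂` along a `J`-holomorphic
disc (the Levi form of `Re z₂`) for a structure in normal form (1). -/
theorem levi_form_of_re_z2
    (Ω : Set C2) (hΩ : IsOpen Ω)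
    (J : C2 → (C2 →L[ℝ] C2)) (hJs : ContDiffOn ℝ (⊤ : ℕ∞) J Ω)
    (hJsq : ∀ z ∈ Ω, (J z).comp (J z) = -ContinuousLinearMap.id ℝ C2)
    (a₁ b₁ c₁ a₂ b₂ c₂ : C2 → ℝ)
    (hNF : IsNormalForm1 J Ω a₁ b₁ c₁ a₂ b₂ c₂)
    (u : ℂ → C2) (hu : JDisc J Ω u) (ζ₀ : ℂ) (hζ₀ : ζ₀ ∈ Metric.ball (0:ℂ) 1) :
    lap (fun t => ((u t).2).re) ζ₀ =
      ((a₁ (u ζ₀) - a₂ (u ζ₀)) * fderiv ℝ a₂ (u ζ₀) ((1:ℂ), (0:ℂ))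
          - c₂ (u ζ₀) * fderiv ℝ b₂ (u ζ₀) ((1:ℂ), (0:ℂ))
          + c₁ (u ζ₀) * fderiv ℝ a₂ (u ζ₀) ((Complex.I), (0:ℂ)))
        * (fderiv ℝ u ζ₀ 1).1.re * (fderiv ℝ u ζ₀ 1).2.re
      + ((a₁ (u ζ₀) + a₂ (u ζ₀)) * fderiv ℝ b₂ (u ζ₀) ((1:ℂ), (0:ℂ))
          - b₂ (u ζ₀) * fderiv ℝ a₂ (u ζ₀) ((1:ℂ), (0:ℂ))
          + c₁ (u ζ₀) * fderiv ℝ b₂ (u ζ₀) ((Complex.I), (0:ℂ)))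
        * (fderiv ℝ u ζ₀ 1).1.re * (fderiv ℝ u ζ₀ 1).2.im
      + (-(a₁ (u ζ₀) + a₂ (u ζ₀)) * fderiv ℝ a₂ (u ζ₀) ((Complex.I), (0:ℂ))
          + b₁ (u ζ₀) * fderiv ℝ a₂ (u ζ₀) ((1:ℂ), (0:ℂ))
          - c₂ (u ζ₀) * fderiv ℝ b₂ (u ζ₀) ((Complex.I), (0:ℂ)))
        * (fderiv ℝ u ζ₀ 1).1.im * (fderiv ℝ u ζ₀ 1).2.re
      + ((a₂ (u ζ₀) - a₁ (u ζ₀)) * fderiv ℝ b₂ (u ζ₀) ((Complex.I), (0:ℂ))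
          + b₁ (u ζ₀) * fderiv ℝ b₂ (u ζ₀) ((1:ℂ), (0:ℂ))
          - b₂ (u ζ₀) * fderiv ℝ a₂ (u ζ₀) ((Complex.I), (0:ℂ)))
        * (fderiv ℝ u ζ₀ 1).1.im * (fderiv ℝ u ζ₀ 1).2.im
      + (fderiv ℝ a₂ (u ζ₀) ((0:ℂ), (Complex.I))
          - fderiv ℝ b₂ (u ζ₀) ((0:ℂ), (1:ℂ)))
        * (c₂ (u ζ₀) * (fderiv ℝ u ζ₀ 1).2.re ^ 2
          - 2 * a₂ (u ζ₀) * (fderiv ℝ u ζ₀ 1).2.re * (fderiv ℝ u ζ₀ 1).2.im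
          - b₂ (u ζ₀) * (fderiv ℝ u ζ₀ 1).2.im ^ 2) :=
  levi_form_of_re_z2_general Ω hΩ J hJsq a₁ b₁ c₁ a₂ b₂ c₂ hNF u hu ζ₀ hζ₀

end
end
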